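/- Let (ψ̃, w̃) be a smooth solution of the constant-coefficient DS system i ψ̃_t + ψ̃_xx + ψ̃_yy = |ψ̃|²ψ̃ + ψ̃ w̃, w̃_xx − w̃_yy = (|ψ̃|²)_yy (coefficients (1,1,1,1,−1,1)). Define ψ(t,x,y) = exp[(i/8)(e^{−t}x² − e^{t}y²)] ψ̃(t, e^{−t/2}x, e^{t/2}y) and w(t,x,y) = e^{4t} w̃(t, e^{−t/2}x, e^{t/2}y) + (e^{4t}/16)(e^{−t}x² + e^{t}y²). Then (ψ, w) is a solution of the variable coefficient Davey–Stewartson system i ψ_t + e^{t}ψ_xx + e^{−t}ψ_yy = |ψ|²ψ + e^{−4t}ψw, w_xx − e^{−2t}w_yy = e^{2t}(|ψ|²)_yy. -/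

import Mathlib

noncomputable section

/-- Partial derivative in the first (time) variable. -/
def dt3 (f : ℝ → ℝ → ℝ → ℂ) : ℝ → ℝ → ℝ → ℂ := fun t x y => deriv (fun s => f s x y) t

/-- Partial derivative in the second (x) variable. -/
def dx3 (f : ℝ → ℝ → ℝ → ℂ) : ℝ → ℝ → ℝ → ℂ := fun t x y => deriv (fun s => f t s y) x

/-- Partial derivative in the third (y) variable. -/
def dy3 (f : ℝ → ℝ → ℝ → ℂ) : ℝ → ℝ → ℝ → ℂ := fun t x y => deriv (fun s => f t x s) y

/-- Partial derivative in the second (x) variable, real-valued functions. -/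
def rx3 (f : ℝ → ℝ → ℝ → ℝ) : ℝ → ℝ → ℝ → ℝ := fun t x y => deriv (fun s => f t s y) x

/-- Partial derivative in the third (y) variable, real-valued functions. -/
def ry3 (f : ℝ → ℝ → ℝ → ℝ) : ℝ → ℝ → ℝ → ℝ := fun t x y => deriv (fun s => f t x s) y

/-- Smoothness of a complex-valued function of (t,x,y). -/
def Smooth3C (f : ℝ → ℝ → ℝ → ℂ) : Prop :=
  ContDiff ℝ (⊤ : ℕ∞) (fun p : ℝ × ℝ × ℝ => f p.1 p.2.1 p.2.2)

/-- Smoothness of a real-valued function of (t,x,y). -/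
def Smooth3R (f : ℝ → ℝ → ℝ → ℝ) : Prop :=
  ContDiff ℝ (⊤ : ℕ∞) (fun p : ℝ × ℝ × ℝ => f p.1 p.2.1 p.2.2)

/-- The Davey–Stewartson system with constants ε₁, ε₂, δ₁, δ₂ holds at the point (t,x,y):
`i ψ_t + ψ_xx + ε₁ ψ_yy = ε₂ |ψ|² ψ + ψ w`, `w_xx + δ₁ w_yy = δ₂ (|ψ|²)_yy`. -/
def DSAt (ε1 ε2 δ1 δ2 : ℝ) (ψ : ℝ → ℝ → ℝ → ℂ) (w : ℝ → ℝ → ℝ → ℝ)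
    (t x y : ℝ) : Prop :=
  Complex.I * dt3 ψ t x y + dx3 (dx3 ψ) t x y + (ε1 : ℂ) * dy3 (dy3 ψ) t x y
      = (ε2 : ℂ) * (‖ψ t x y‖)^2 * ψ t x y + ψ t x y * (w t x y : ℂ)
    ∧ rx3 (rx3 w) t x y + δ1 * ry3 (ry3 w) t x y
      = δ2 * ry3 (ry3 (fun t x y => (‖ψ t x y‖)^2)) t x y

/-- (ψ, w) is a solution of the Davey–Stewartson system everywhere. -/
def IsDSSolution (ε1 ε2 δ1 δ2 : ℝ) (ψ : ℝ → ℝ → ℝ → ℂ) (w : ℝ → ℝ → ℝ → ℝ) : Prop :=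
  ∀ t x y : ℝ, DSAt ε1 ε2 δ1 δ2 ψ w t x y

/-- The variable coefficient Davey–Stewartson system with coefficient functions
p₁,p₂,q₁,q₂,r₁,r₂ of t holds at the point (t,x,y):
`i ψ_t + p₁ψ_xx + p₂ψ_yy = q₁|ψ|²ψ + q₂ψw`, `w_xx + r₁w_yy = r₂(|ψ|²)_yy`. -/
def vcDSAt (p1 p2 q1 q2 r1 r2 : ℝ → ℝ) (ψ : ℝ → ℝ → ℝ → ℂ) (w : ℝ → ℝ → ℝ → ℝ)
    (t x y : ℝ) : Prop :=
  Complex.I * dt3 ψ t x y + (p1 t : ℂ) * dx3 (dx3 ψ) t x y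
      + (p2 t : ℂ) * dy3 (dy3 ψ) t x y
      = (q1 t : ℂ) * (‖ψ t x y‖)^2 * ψ t x y
        + (q2 t : ℂ) * ψ t x y * (w t x y : ℂ)
    ∧ rx3 (rx3 w) t x y + r1 t * ry3 (ry3 w) t x y
      = r2 t * ry3 (ry3 (fun t x y => (‖ψ t x y‖)^2)) t x y

/-- (ψ, w) is a solution of the vcDS system everywhere. -/
def IsVcDSSolution (p1 p2 q1 q2 r1 r2 : ℝ → ℝ)
    (ψ : ℝ → ℝ → ℝ → ℂ) (w : ℝ → ℝ → ℝ → ℝ) : Prop :=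
  ∀ t x y : ℝ, vcDSAt p1 p2 q1 q2 r1 r2 ψ w t x y

/-! The substitution is a gauge transformation `ψ = e^{iφ} ψ̃` with the quadratic phase
`φ = (e^{-t}x² - e^t y²)/8`, combined with the time-dependent rescaling
`(x, y) ↦ (e^{-t/2}x, e^{t/2}y)`. By the chain rule every derivative of `(ψ, w)` is a combination
of derivatives of `(ψ̃, w̃)` at the rescaled point. The phase is chosen so that the first-order
terms `ψ̃_x`, `ψ̃_y` coming from `ψ_t` cancel those coming from `ψ_xx`, `ψ_yy`, the imaginary
zeroth-order terms `e^t φ_xx + e^{-t} φ_yy` vanish, and the quadratic potential added to `w`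
absorbs the real ones `-φ_t - e^t φ_x² - e^{-t} φ_y²`; what remains is `e^{iφ}` times the
constant-coefficient equation. In the second equation the contributions of that potential
cancel. -/

open Complex

section Calculus

variable {E : Type*} [NormedAddCommGroup E] [NormedSpace ℝ E]

theorem deriv_deriv_eq_of_hasDerivAt {f f' : ℝ → E} {f'' : E} {x : ℝ}
    (hf : ∀ s, HasDerivAt f (f' s) s) (hf' : HasDerivAt f' f'' x) :
    deriv (deriv f) x = f'' := by
  rw [show deriv f = f' from funext fun s => (hf s).deriv]
  exact hf'.deriv

theorem contDiff_slice_x {f : ℝ → ℝ → ℝ → E} {n : WithTop ℕ∞}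
    (hf : ContDiff ℝ n fun p : ℝ × ℝ × ℝ => f p.1 p.2.1 p.2.2) (t y : ℝ) :
    ContDiff ℝ n fun x => f t x y :=
  hf.comp (contDiff_const.prodMk (contDiff_id.prodMk contDiff_const))

theorem contDiff_slice_y {f : ℝ → ℝ → ℝ → E} {n : WithTop ℕ∞}
    (hf : ContDiff ℝ n fun p : ℝ × ℝ × ℝ => f p.1 p.2.1 p.2.2) (t x : ℝ) :
    ContDiff ℝ n fun y => f t x y :=
  hf.comp (contDiff_const.prodMk (contDiff_const.prodMk contDiff_id))

theorem deriv_deriv_comp_mul_left (u : ℝ → E) (c x : ℝ) :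
    deriv (deriv fun s => u (c * s)) x = c ^ 2 • deriv (deriv u) (c * x) := by
  have h : (deriv fun s => u (c * s)) = fun s => c • deriv u (c * s) :=
    funext (deriv_comp_mul_left c u)
  rw [h, deriv_fun_const_smul_field, deriv_comp_mul_left, smul_smul, sq]

theorem hasDerivAt_comp_mul_left {u : ℝ → E} {c s : ℝ} (hu : DifferentiableAt ℝ u (c * s)) :
    HasDerivAt (fun s => u (c * s)) (c • deriv u (c * s)) s :=
  (hu.hasDerivAt.scomp s ((hasDerivAt_id s).const_mul c)).congr_deriv (by simp)

end Calculus

theorem hasDerivAt_comp₃ {f : ℝ → ℝ → ℝ → ℂ} {c₁ c₂ c₃ : ℝ → ℝ} {d₁ d₂ d₃ s : ℝ}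
    (hf : DifferentiableAt ℝ (fun p : ℝ × ℝ × ℝ => f p.1 p.2.1 p.2.2) (c₁ s, c₂ s, c₃ s))
    (h₁ : HasDerivAt c₁ d₁ s) (h₂ : HasDerivAt c₂ d₂ s) (h₃ : HasDerivAt c₃ d₃ s) :
    HasDerivAt (fun u => f (c₁ u) (c₂ u) (c₃ u))
      (d₁ * dt3 f (c₁ s) (c₂ s) (c₃ s) + d₂ * dx3 f (c₁ s) (c₂ s) (c₃ s)
        + d₃ * dy3 f (c₁ s) (c₂ s) (c₃ s)) s := by
  obtain ⟨L, hL⟩ : ∃ L, HasFDerivAt (fun p : ℝ × ℝ × ℝ => f p.1 p.2.1 p.2.2) L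
      (c₁ s, c₂ s, c₃ s) := ⟨_, hf.hasFDerivAt⟩
  have partial_eq : ∀ (γ : ℝ → ℝ × ℝ × ℝ) (v : ℝ × ℝ × ℝ) (r : ℝ), HasDerivAt γ v r →
      γ r = (c₁ s, c₂ s, c₃ s) →
      deriv (fun u => f (γ u).1 (γ u).2.1 (γ u).2.2) r = L v := by
    intro γ v r hγ hr
    rw [← hr] at hL
    exact (hL.comp_hasDerivAt r hγ).deriv
  have hT : dt3 f (c₁ s) (c₂ s) (c₃ s) = L (1, 0, 0) :=
    partial_eq (fun u => (u, c₂ s, c₃ s)) _ _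
      ((hasDerivAt_id _).prodMk ((hasDerivAt_const _ _).prodMk (hasDerivAt_const _ _))) rfl
  have hX : dx3 f (c₁ s) (c₂ s) (c₃ s) = L (0, 1, 0) :=
    partial_eq (fun u => (c₁ s, u, c₃ s)) _ _
      ((hasDerivAt_const _ _).prodMk ((hasDerivAt_id _).prodMk (hasDerivAt_const _ _))) rfl
  have hY : dy3 f (c₁ s) (c₂ s) (c₃ s) = L (0, 0, 1) :=
    partial_eq (fun u => (c₁ s, c₂ s, u)) _ _
      ((hasDerivAt_const _ _).prodMk ((hasDerivAt_const _ _).prodMk (hasDerivAt_id _))) rfl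
  have hv : ((d₁, d₂, d₃) : ℝ × ℝ × ℝ) = d₁ • (1, 0, 0) + d₂ • (0, 1, 0) + d₃ • (0, 0, 1) := by
    simp
  refine (hL.comp_hasDerivAt s (h₁.prodMk (h₂.prodMk h₃))).congr_deriv ?_
  rw [hT, hX, hY, hv]
  simp only [map_add, map_smul, Complex.real_smul]

theorem deriv_deriv_cexp_mul_comp_mul {g g' : ℝ → ℝ} {g'' : ℝ} {u : ℝ → ℂ} {x : ℝ}
    (hg : ∀ s, HasDerivAt g (g' s) s) (hg' : HasDerivAt g' g'' x) (hu : ContDiff ℝ 2 u)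
    (c : ℝ) :
    deriv (deriv fun s => cexp (I * g s) * u (c * s)) x =
      cexp (I * g x) * ((I * g'' - g' x ^ 2) * u (c * x) + 2 * I * g' x * c * deriv u (c * x)
        + c ^ 2 * deriv (deriv u) (c * x)) := by
  have hE : ∀ s, HasDerivAt (fun s => cexp (I * g s)) (cexp (I * g s) * (I * g' s)) s :=
    fun s => ((hg s).ofReal_comp.const_mul I).cexp
  have hU : ∀ s, HasDerivAt (fun s => u (c * s)) (c * deriv u (c * s)) s := fun s => by
    simpa only [Complex.real_smul] using
      hasDerivAt_comp_mul_left ((hu.differentiable two_ne_zero) (c * s))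
  have hE' := (hE x).fun_mul (hg'.ofReal_comp.const_mul I)
  have hU' : HasDerivAt (fun s => deriv u (c * s)) (c * deriv (deriv u) (c * x)) x := by
    simpa only [Complex.real_smul] using
      hasDerivAt_comp_mul_left (((hu.deriv' (n := 1)).differentiable one_ne_zero) (c * x))
  rw [deriv_deriv_eq_of_hasDerivAt (f := fun s => cexp (I * g s) * u (c * s))
    (fun s => (hE s).fun_mul (hU s))
    ((hE'.fun_mul (hU x)).add ((hE x).fun_mul (hU'.const_mul (c : ℂ))))]
  linear_combination (cexp (I * g x) * g' x ^ 2 * u (c * x)) * I_sq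

theorem deriv_deriv_mul_comp_mul_add {v q q' : ℝ → ℝ} {q'' x : ℝ} (hv : ContDiff ℝ 2 v)
    (hq : ∀ s, HasDerivAt q (q' s) s) (hq' : HasDerivAt q' q'' x) (A c : ℝ) :
    deriv (deriv fun s => A * v (c * s) + q s) x
      = A * (c ^ 2 * deriv (deriv v) (c * x)) + q'' := by
  have hV : ∀ s, HasDerivAt (fun s => v (c * s)) (c * deriv v (c * s)) s := fun s =>
    hasDerivAt_comp_mul_left ((hv.differentiable two_ne_zero) (c * s))
  have hV' : HasDerivAt (fun s => deriv v (c * s)) (c * deriv (deriv v) (c * x)) x :=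
    hasDerivAt_comp_mul_left (((hv.deriv' (n := 1)).differentiable one_ne_zero) (c * x))
  rw [deriv_deriv_eq_of_hasDerivAt (f := fun s => A * v (c * s) + q s)
    (fun s => ((hV s).const_mul A).add (hq s)) (((hV'.const_mul c).const_mul A).add hq')]
  ring

def transformPhase (t x y : ℝ) : ℝ := 1 / 8 * (Real.exp (-t) * x ^ 2 - Real.exp t * y ^ 2)

def transformPsi (ψ : ℝ → ℝ → ℝ → ℂ) : ℝ → ℝ → ℝ → ℂ := fun t x y =>
  cexp (I * transformPhase t x y) * ψ t (Real.exp (-t / 2) * x) (Real.exp (t / 2) * y)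

def transformW (w : ℝ → ℝ → ℝ → ℝ) : ℝ → ℝ → ℝ → ℝ := fun t x y =>
  Real.exp (4 * t) * w t (Real.exp (-t / 2) * x) (Real.exp (t / 2) * y)
    + Real.exp (4 * t) / 16 * (Real.exp (-t) * x ^ 2 + Real.exp t * y ^ 2)

section Transform

variable {ψ : ℝ → ℝ → ℝ → ℂ} {w : ℝ → ℝ → ℝ → ℝ}

theorem norm_transformPsi (ψ : ℝ → ℝ → ℝ → ℂ) (t x y : ℝ) :
    ‖transformPsi ψ t x y‖ = ‖ψ t (Real.exp (-t / 2) * x) (Real.exp (t / 2) * y)‖ := by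
  rw [transformPsi, norm_mul, mul_comm I, norm_exp_ofReal_mul_I, one_mul]

theorem dt3_transformPsi (hψ : ContDiff ℝ 2 fun p : ℝ × ℝ × ℝ => ψ p.1 p.2.1 p.2.2)
    (t x y : ℝ) :
    dt3 (transformPsi ψ) t x y = cexp (I * transformPhase t x y) *
      (I * ((-(1 / 8) * (Real.exp (-t) * x ^ 2 + Real.exp t * y ^ 2) : ℝ) : ℂ)
          * ψ t (Real.exp (-t / 2) * x) (Real.exp (t / 2) * y)
        + dt3 ψ t (Real.exp (-t / 2) * x) (Real.exp (t / 2) * y)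
        - ((Real.exp (-t / 2) * x / 2 : ℝ) : ℂ)
          * dx3 ψ t (Real.exp (-t / 2) * x) (Real.exp (t / 2) * y)
        + ((Real.exp (t / 2) * y / 2 : ℝ) : ℂ)
          * dy3 ψ t (Real.exp (-t / 2) * x) (Real.exp (t / 2) * y)) := by
  have hφ : HasDerivAt (fun s => transformPhase s x y)
      (-(1 / 8) * (Real.exp (-t) * x ^ 2 + Real.exp t * y ^ 2)) t := by
    have := (((Real.hasDerivAt_exp (-t)).comp t (hasDerivAt_neg t)).mul_const (x ^ 2)).sub
      ((Real.hasDerivAt_exp t).mul_const (y ^ 2)) |>.const_mul (1 / 8)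
    exact this.congr_deriv (by ring)
  have hX : HasDerivAt (fun s => Real.exp (-s / 2) * x) (-(Real.exp (-t / 2) * x / 2)) t := by
    have := ((Real.hasDerivAt_exp (-t / 2)).comp t ((hasDerivAt_neg t).div_const 2)).mul_const x
    exact this.congr_deriv (by ring)
  have hY : HasDerivAt (fun s => Real.exp (s / 2) * y) (Real.exp (t / 2) * y / 2) t := by
    have := ((Real.hasDerivAt_exp (t / 2)).comp t ((hasDerivAt_id t).div_const 2)).mul_const y
    exact this.congr_deriv (by ring)
  have hψ' := hasDerivAt_comp₃ (hψ.differentiable two_ne_zero _) (hasDerivAt_id' t) hX hY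
  refine ((hφ.ofReal_comp.const_mul I).cexp.fun_mul hψ').deriv.trans ?_
  push_cast
  ring

theorem dx3_dx3_transformPsi (hψ : ContDiff ℝ 2 fun p : ℝ × ℝ × ℝ => ψ p.1 p.2.1 p.2.2)
    (t x y : ℝ) :
    dx3 (dx3 (transformPsi ψ)) t x y = cexp (I * transformPhase t x y) *
      ((I * ((Real.exp (-t) / 4 : ℝ) : ℂ) - ((Real.exp (-t) * x / 4 : ℝ) : ℂ) ^ 2)
          * ψ t (Real.exp (-t / 2) * x) (Real.exp (t / 2) * y)
        + 2 * I * ((Real.exp (-t) * x / 4 : ℝ) : ℂ) * (Real.exp (-t / 2) : ℂ)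
          * dx3 ψ t (Real.exp (-t / 2) * x) (Real.exp (t / 2) * y)
        + (Real.exp (-t / 2) : ℂ) ^ 2
          * dx3 (dx3 ψ) t (Real.exp (-t / 2) * x) (Real.exp (t / 2) * y)) := by
  have hg : ∀ s, HasDerivAt (fun s => transformPhase t s y) (Real.exp (-t) * s / 4) s := fun s =>
    ((((hasDerivAt_pow 2 s).const_mul (Real.exp (-t))).sub_const (Real.exp t * y ^ 2)).const_mul
      (1 / 8)).congr_deriv (by ring)
  have hg' : HasDerivAt (fun s => Real.exp (-t) * s / 4) (Real.exp (-t) / 4) x :=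
    ((hasDerivAt_id x).const_mul _).div_const 4 |>.congr_deriv (by ring)
  exact deriv_deriv_cexp_mul_comp_mul hg hg' (contDiff_slice_x hψ t _) _

theorem dy3_dy3_transformPsi (hψ : ContDiff ℝ 2 fun p : ℝ × ℝ × ℝ => ψ p.1 p.2.1 p.2.2)
    (t x y : ℝ) :
    dy3 (dy3 (transformPsi ψ)) t x y = cexp (I * transformPhase t x y) *
      ((I * ((-(Real.exp t / 4) : ℝ) : ℂ) - ((-(Real.exp t * y / 4) : ℝ) : ℂ) ^ 2)
          * ψ t (Real.exp (-t / 2) * x) (Real.exp (t / 2) * y)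
        + 2 * I * ((-(Real.exp t * y / 4) : ℝ) : ℂ) * (Real.exp (t / 2) : ℂ)
          * dy3 ψ t (Real.exp (-t / 2) * x) (Real.exp (t / 2) * y)
        + (Real.exp (t / 2) : ℂ) ^ 2
          * dy3 (dy3 ψ) t (Real.exp (-t / 2) * x) (Real.exp (t / 2) * y)) := by
  have hg : ∀ s, HasDerivAt (fun s => transformPhase t x s) (-(Real.exp t * s / 4)) s := fun s =>
    ((((hasDerivAt_pow 2 s).const_mul (Real.exp t)).const_sub (Real.exp (-t) * x ^ 2)).const_mul
      (1 / 8)).congr_deriv (by ring)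
  have hg' : HasDerivAt (fun s => -(Real.exp t * s / 4)) (-(Real.exp t / 4)) y :=
    (((hasDerivAt_id y).const_mul _).div_const 4).neg |>.congr_deriv (by ring)
  exact deriv_deriv_cexp_mul_comp_mul hg hg' (contDiff_slice_y hψ t _) _

theorem ry3_ry3_normSq_transformPsi (ψ : ℝ → ℝ → ℝ → ℂ) (t x y : ℝ) :
    ry3 (ry3 fun t x y => ‖transformPsi ψ t x y‖ ^ 2) t x y
      = Real.exp (t / 2) ^ 2 * ry3 (ry3 fun t x y => ‖ψ t x y‖ ^ 2) t
          (Real.exp (-t / 2) * x) (Real.exp (t / 2) * y) := by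
  have h : (fun s => ‖transformPsi ψ t x s‖ ^ 2)
      = fun s => ‖ψ t (Real.exp (-t / 2) * x) (Real.exp (t / 2) * s)‖ ^ 2 := by
    simp only [norm_transformPsi]
  exact (congrArg (fun f => deriv (deriv f) y) h).trans
    (deriv_deriv_comp_mul_left (fun r => ‖ψ t (Real.exp (-t / 2) * x) r‖ ^ 2) _ y)

theorem rx3_rx3_transformW (hw : ContDiff ℝ 2 fun p : ℝ × ℝ × ℝ => w p.1 p.2.1 p.2.2)
    (t x y : ℝ) :
    rx3 (rx3 (transformW w)) t x y
      = Real.exp (4 * t) * (Real.exp (-t / 2) ^ 2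
          * rx3 (rx3 w) t (Real.exp (-t / 2) * x) (Real.exp (t / 2) * y))
        + Real.exp (4 * t) / 16 * (2 * Real.exp (-t)) := by
  have hq : ∀ s, HasDerivAt
      (fun s => Real.exp (4 * t) / 16 * (Real.exp (-t) * s ^ 2 + Real.exp t * y ^ 2))
      (Real.exp (4 * t) / 16 * (2 * Real.exp (-t) * s)) s := fun s =>
    (((hasDerivAt_pow 2 s).const_mul _).add_const _).const_mul _ |>.congr_deriv (by ring)
  have hq' : HasDerivAt (fun s => Real.exp (4 * t) / 16 * (2 * Real.exp (-t) * s))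
      (Real.exp (4 * t) / 16 * (2 * Real.exp (-t))) x :=
    ((hasDerivAt_id x).const_mul _).const_mul _ |>.congr_deriv (by ring)
  exact deriv_deriv_mul_comp_mul_add (contDiff_slice_x hw t _) hq hq' _ _

theorem ry3_ry3_transformW (hw : ContDiff ℝ 2 fun p : ℝ × ℝ × ℝ => w p.1 p.2.1 p.2.2)
    (t x y : ℝ) :
    ry3 (ry3 (transformW w)) t x y
      = Real.exp (4 * t) * (Real.exp (t / 2) ^ 2
          * ry3 (ry3 w) t (Real.exp (-t / 2) * x) (Real.exp (t / 2) * y))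
        + Real.exp (4 * t) / 16 * (2 * Real.exp t) := by
  have hq : ∀ s, HasDerivAt
      (fun s => Real.exp (4 * t) / 16 * (Real.exp (-t) * x ^ 2 + Real.exp t * s ^ 2))
      (Real.exp (4 * t) / 16 * (2 * Real.exp t * s)) s := fun s =>
    (((hasDerivAt_pow 2 s).const_mul _).const_add _).const_mul _ |>.congr_deriv (by ring)
  have hq' : HasDerivAt (fun s => Real.exp (4 * t) / 16 * (2 * Real.exp t * s))
      (Real.exp (4 * t) / 16 * (2 * Real.exp t)) y :=
    ((hasDerivAt_id y).const_mul _).const_mul _ |>.congr_deriv (by ring)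
  exact deriv_deriv_mul_comp_mul_add (contDiff_slice_y hw t _) hq hq' _ _

end Transform

theorem vcDSAt_transform {ψ : ℝ → ℝ → ℝ → ℂ} {w : ℝ → ℝ → ℝ → ℝ}
    (hψ : ContDiff ℝ 2 fun p : ℝ × ℝ × ℝ => ψ p.1 p.2.1 p.2.2)
    (hw : ContDiff ℝ 2 fun p : ℝ × ℝ × ℝ => w p.1 p.2.1 p.2.2) (t x y : ℝ)
    (h : vcDSAt (fun _ => 1) (fun _ => 1) (fun _ => 1) (fun _ => 1) (fun _ => -1) (fun _ => 1)
      ψ w t (Real.exp (-t / 2) * x) (Real.exp (t / 2) * y)) :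
    vcDSAt (fun t => Real.exp t) (fun t => Real.exp (-t)) (fun _ => 1)
      (fun t => Real.exp (-4 * t)) (fun t => -Real.exp (-2 * t)) (fun t => Real.exp (2 * t))
      (transformPsi ψ) (transformW w) t x y := by
  obtain ⟨h₁, h₂⟩ := h
  have ha : Real.exp (t / 2) ≠ 0 := (Real.exp_pos _).ne'
  have e₁ : Real.exp (-t / 2) = (Real.exp (t / 2))⁻¹ := by rw [neg_div, Real.exp_neg]
  have e₂ : Real.exp t = Real.exp (t / 2) ^ 2 := by rw [← Real.exp_nat_mul]; ring_nf
  have e₃ : Real.exp (-t) = (Real.exp (t / 2))⁻¹ ^ 2 := by rw [Real.exp_neg, e₂, inv_pow]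
  have e₄ : Real.exp (4 * t) = Real.exp (t / 2) ^ 8 := by rw [← Real.exp_nat_mul]; ring_nf
  have e₅ : Real.exp (-4 * t) = (Real.exp (t / 2))⁻¹ ^ 8 := by
    rw [neg_mul, Real.exp_neg, e₄, inv_pow]
  have e₆ : Real.exp (2 * t) = Real.exp (t / 2) ^ 4 := by rw [← Real.exp_nat_mul]; ring_nf
  have e₇ : Real.exp (-2 * t) = (Real.exp (t / 2))⁻¹ ^ 4 := by
    rw [neg_mul, Real.exp_neg, e₆, inv_pow]
  constructor
  · rw [dt3_transformPsi hψ, dx3_dx3_transformPsi hψ, dy3_dy3_transformPsi hψ,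
      norm_transformPsi]
    simp only [transformPsi, transformW]
    generalize cexp (I * transformPhase t x y) = E
    simp only [e₁, e₂, e₃, e₄, e₅] at h₁ ⊢
    generalize Real.exp (t / 2) = a at ha h₁ ⊢
    have ha' : (a : ℂ) ≠ 0 := by exact_mod_cast ha
    push_cast at h₁ ⊢
    linear_combination (norm := skip) E * h₁
      - E * ψ t (a⁻¹ * x) (a * y) * ((a : ℂ)⁻¹ ^ 2 * x ^ 2 + a ^ 2 * y ^ 2) / 8 * I_sq
    field_simp
    ring
  · rw [rx3_rx3_transformW hw, ry3_ry3_transformW hw, ry3_ry3_normSq_transformPsi]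
    simp only [e₁, e₂, e₃, e₄, e₆, e₇] at h₂ ⊢
    generalize Real.exp (t / 2) = a at ha h₂ ⊢
    linear_combination (norm := skip) a ^ 6 * h₂
    field_simp
    ring

theorem vcds_example_equivalent_to_constant_DS
    (ψt : ℝ → ℝ → ℝ → ℂ) (wt : ℝ → ℝ → ℝ → ℝ)
    (hψt : Smooth3C ψt) (hwt : Smooth3R wt)
    (hsol : IsVcDSSolution (fun _ => 1) (fun _ => 1) (fun _ => 1) (fun _ => 1)
        (fun _ => -1) (fun _ => 1) ψt wt) :
    IsVcDSSolution
        (fun t => Real.exp t) (fun t => Real.exp (-t)) (fun _ => 1)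
        (fun t => Real.exp (-4*t)) (fun t => -Real.exp (-2*t)) (fun t => Real.exp (2*t))
      (fun t x y => Complex.exp (Complex.I
          * (((1/8) * (Real.exp (-t) * x^2 - Real.exp t * y^2) : ℝ) : ℂ))
        * ψt t (Real.exp (-t/2) * x) (Real.exp (t/2) * y))
      (fun t x y => Real.exp (4*t) * wt t (Real.exp (-t/2) * x) (Real.exp (t/2) * y)
        + (Real.exp (4*t) / 16) * (Real.exp (-t) * x^2 + Real.exp t * y^2)) := by
  have hψ : ContDiff ℝ 2 fun p : ℝ × ℝ × ℝ => ψt p.1 p.2.1 p.2.2 := hψt.of_le (by norm_cast)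
  have hw : ContDiff ℝ 2 fun p : ℝ × ℝ × ℝ => wt p.1 p.2.1 p.2.2 := hwt.of_le (by norm_cast)
  exact fun t x y => vcDSAt_transform hψ hw t x y (hsol t _ _)
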